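/- Correctness of the unidirectional (top-down) labeling recursion: Let N be a network model with weights w : A → ℝ^K. Define label sets T(x) ⊆ ℝ^K for each node x by T(r) = {0} and, for any node x not equal to r, T(x) = ND(⋃_{a : arc with head x} (T(tail(a)) + {w(a)})), where S + {c} denotes {y + c : y ∈ S}. Then T(t) = P(N), the Pareto frontier of N. Moreover, for every node x, T(x) = ND({w(q) : q a directed path from r to x}). -/

import Mathlib

open Pointwise

/-- `y` dominates `y'`: componentwise at least as large and not equal. -/
def dominates {K : ℕ} (y y' : Fin K → ℝ) : Prop :=
  (∀ k, y' k ≤ y k) ∧ y ≠ y'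

/-- The nondominated subset of `S`. -/
def ND {K : ℕ} (S : Set (Fin K → ℝ)) : Set (Fin K → ℝ) :=
  {y ∈ S | ¬ ∃ y' ∈ S, dominates y' y}

/-- `IsPath tl hd p u v`: the list of arcs `p` forms a directed walk from `u` to `v`. -/
def IsPath {V A : Type*} (tl hd : A → V) : List A → V → V → Prop
  | [], u, v => u = v
  | a :: p, u, v => tl a = u ∧ IsPath tl hd p (hd a) v

/-- Total weight of a list of arcs. -/
def pathWeight {A : Type*} {K : ℕ} (w : A → Fin K → ℝ) (p : List A) : Fin K → ℝ :=
  (p.map w).sum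

/-- A layered-acyclic network model with `n + 1` layers (indexed `1, …, n+1`),
a single root in layer `1`, a single terminal in layer `n+1`, every arc going
from one layer to the next, and `K`-dimensional arc weights. -/
structure Network (V A : Type*) (K : ℕ) where
  tl : A → V
  hd : A → V
  w : A → Fin K → ℝ
  n : ℕ
  layer : V → ℕ
  layer_pos : ∀ v, 1 ≤ layer v
  layer_le : ∀ v, layer v ≤ n + 1
  arc_step : ∀ a, layer (hd a) = layer (tl a) + 1
  root : V
  terminal : V
  root_layer : layer root = 1
  terminal_layer : layer terminal = n + 1
  root_unique : ∀ v, layer v = 1 → v = root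
  terminal_unique : ∀ v, layer v = n + 1 → v = terminal
  layer_nonempty : ∀ j, 1 ≤ j → j ≤ n + 1 → ∃ v, layer v = j

namespace Network

variable {V A : Type*} {K : ℕ}

/-- The set of directed paths from `u` to `v`. -/
def Paths (N : Network V A K) (u v : V) : Set (List A) :=
  {p | IsPath N.tl N.hd p u v}

/-- The set of weights of directed paths from `u` to `v`. -/
def weights (N : Network V A K) (u v : V) : Set (Fin K → ℝ) :=
  pathWeight N.w '' N.Paths u v

/-- The Pareto frontier of the network. -/
def Pareto (N : Network V A K) : Set (Fin K → ℝ) :=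
  ND (N.weights N.root N.terminal)

end Network

/-!
Induction on the layer of `x`. An `r`–`x` path with `x ≠ r` is an `r`–`tl a` path followed by
an arc `a` into `x`, so the path weights at `x` are the union over such `a` of the path weights
at `tl a` translated by `w a`. These sets are finite, so each of their points lies below a
nondominated one, and translation is monotone; hence discarding the dominated weights at each
`tl a` before forming the union does not change its nondominated part (Bellman's principle of
optimality), which is exactly the recursion for `T`.
-/

variable {K : ℕ}

lemma dominates_iff_lt {y y' : Fin K → ℝ} : dominates y y' ↔ y' < y :=
  ⟨fun h => lt_of_le_of_ne h.1 (Ne.symm h.2), fun h => ⟨h.le, h.ne'⟩⟩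

lemma mem_ND_iff_maximal {S : Set (Fin K → ℝ)} {y : Fin K → ℝ} :
    y ∈ ND S ↔ Maximal (· ∈ S) y := by
  simp only [ND, maximal_iff_forall_gt, dominates_iff_lt]
  grind

lemma ND_subset (S : Set (Fin K → ℝ)) : ND S ⊆ S := fun _ h => h.1

lemma ND_singleton (y : Fin K → ℝ) : ND {y} = {y} := by
  ext z
  simp only [mem_ND_iff_maximal, Set.mem_singleton_iff]
  exact ⟨fun h => h.prop, fun h => ⟨h, fun _ hz _ => hz.trans h.symm |>.le⟩⟩

lemma Set.Finite.exists_mem_ND_le {S : Set (Fin K → ℝ)} (hS : S.Finite) {y : Fin K → ℝ}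
    (hy : y ∈ S) : ∃ z ∈ ND S, y ≤ z := by
  obtain ⟨z, hyz, hz⟩ := hS.exists_le_maximal hy
  exact ⟨z, mem_ND_iff_maximal.2 hz, hyz⟩

lemma ND_eq_of_subset_of_forall_exists_le {S S' : Set (Fin K → ℝ)} (hsub : S' ⊆ S)
    (hcof : ∀ y ∈ S, ∃ z ∈ S', y ≤ z) : ND S' = ND S := by
  ext y
  simp only [mem_ND_iff_maximal, maximal_iff_forall_gt]
  constructor
  · rintro ⟨hy, hmax⟩
    refine ⟨hsub hy, fun z hyz hz => ?_⟩
    obtain ⟨z', hz', hzz'⟩ := hcof z hz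
    exact hmax (hyz.trans_le hzz') hz'
  · rintro ⟨hy, hmax⟩
    obtain ⟨z, hz, hyz⟩ := hcof y hy
    obtain rfl | hlt := hyz.eq_or_lt
    · exact ⟨hz, fun z' hyz' hz' => hmax hyz' (hsub hz')⟩
    · exact absurd (hsub hz) (hmax hlt)

lemma ND_biUnion_image_ND {ι : Type*} {s : Set ι} {S : ι → Set (Fin K → ℝ)}
    (hS : ∀ i ∈ s, (S i).Finite) {f : ι → (Fin K → ℝ) → Fin K → ℝ} (hf : ∀ i, Monotone (f i)) :
    ND (⋃ i ∈ s, f i '' ND (S i)) = ND (⋃ i ∈ s, f i '' S i) := by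
  refine ND_eq_of_subset_of_forall_exists_le
    (Set.biUnion_mono subset_rfl fun i _ => Set.image_mono (ND_subset _)) ?_
  simp only [Set.mem_iUnion, Set.mem_image, exists_prop]
  rintro _ ⟨i, hi, y, hy, rfl⟩
  obtain ⟨z, hz, hyz⟩ := (hS i hi).exists_mem_ND_le hy
  exact ⟨f i z, ⟨i, hi, z, hz, rfl⟩, hf i hyz⟩

section Paths

variable {V A : Type*}

lemma isPath_append_singleton (tl hd : A → V) (p : List A) (a : A) (u v : V) :
    IsPath tl hd (p ++ [a]) u v ↔ IsPath tl hd p u (tl a) ∧ hd a = v := by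
  induction p generalizing u with
  | nil => simp only [List.nil_append, IsPath]; tauto
  | cons b q ih => simp only [List.cons_append, IsPath, ih, and_assoc]

lemma pathWeight_append_singleton (w : A → Fin K → ℝ) (p : List A) (a : A) :
    pathWeight w (p ++ [a]) = pathWeight w p + w a := by
  simp [pathWeight]

end Paths

namespace Network

variable {V A : Type*} (N : Network V A K)

lemma layer_tl_lt_layer_hd (a : A) : N.layer (N.tl a) < N.layer (N.hd a) := by
  rw [N.arc_step a]; exact Nat.lt_succ_self _

lemma layer_eq_add_length {p : List A} {u v : V} (hp : IsPath N.tl N.hd p u v) :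
    N.layer v = N.layer u + p.length := by
  induction p generalizing u with
  | nil => simp [IsPath] at hp; simp [hp]
  | cons a q ih =>
    obtain ⟨rfl, hq⟩ := hp
    rw [ih hq, N.arc_step a, List.length_cons]; ring

lemma weights_finite [Finite A] (u v : V) : (N.weights u v).Finite := by
  refine Set.Finite.image _ ((List.finite_length_le A (N.n + 1)).subset fun p hp => ?_)
  have := N.layer_eq_add_length hp
  have := N.layer_pos u
  have := N.layer_le v
  simp only [Set.mem_ofPred_eq]
  omega

lemma weights_root_root : N.weights N.root N.root = {0} := by
  refine Set.eq_singleton_iff_unique_mem.2 ⟨⟨[], rfl, rfl⟩, ?_⟩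
  rintro _ ⟨p, hp, rfl⟩
  have := N.layer_eq_add_length hp
  obtain rfl : p = [] := List.length_eq_zero_iff.1 (by omega)
  rfl

lemma weights_eq_biUnion {x : V} (hx : x ≠ N.root) :
    N.weights N.root x =
      ⋃ a ∈ {a : A | N.hd a = x}, (fun z => z + N.w a) '' N.weights N.root (N.tl a) := by
  ext y
  simp only [weights, Paths, Set.mem_iUnion, Set.mem_ofPred_eq, Set.mem_image, exists_prop]
  constructor
  · rintro ⟨p, hp, rfl⟩
    obtain rfl | ⟨q, a, rfl⟩ := List.eq_nil_or_concat' p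
    · exact absurd hp.symm hx
    · rw [isPath_append_singleton] at hp
      exact ⟨a, hp.2, _, ⟨q, hp.1, rfl⟩, (pathWeight_append_singleton N.w q a).symm⟩
  · rintro ⟨a, ha, _, ⟨q, hq, rfl⟩, rfl⟩
    exact ⟨q ++ [a], (isPath_append_singleton _ _ q a _ _).2 ⟨hq, ha⟩,
      pathWeight_append_singleton N.w q a⟩

end Network

theorem top_down_labeling_correct_general {V A : Type*} [Fintype A] {K : ℕ}
    (N : Network V A K) (T : V → Set (Fin K → ℝ))
    (hroot : T N.root = {0})
    (hrec : ∀ x : V, x ≠ N.root →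
      T x = ND (⋃ a ∈ {a : A | N.hd a = x}, (fun z => z + N.w a) '' T (N.tl a))) :
    T N.terminal = N.Pareto ∧ ∀ x : V, T x = ND (N.weights N.root x) := by
  have hlabel : ∀ x, T x = ND (N.weights N.root x) := by
    intro x
    induction hx : N.layer x using Nat.strong_induction_on generalizing x with
    | _ m ih =>
      by_cases hxr : x = N.root
      · rw [hxr, hroot, N.weights_root_root, ND_singleton]
      have htail : ∀ a ∈ {a : A | N.hd a = x}, T (N.tl a) = ND (N.weights N.root (N.tl a)) :=
        fun a ha => ih _ (hx ▸ ha ▸ N.layer_tl_lt_layer_hd a) _ rfl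
      rw [hrec x hxr, Set.iUnion₂_congr fun a ha => by rw [htail a ha], N.weights_eq_biUnion hxr,
        ND_biUnion_image_ND (f := fun a z => z + N.w a) (fun _ _ => N.weights_finite _ _)
          fun _ => add_left_mono]
  exact ⟨hlabel N.terminal, hlabel⟩

/-- **Correctness of the unidirectional (top-down) labeling recursion.**  If the label
sets `T` satisfy `T(r) = {0}` and, for every node `x ≠ r`,
`T(x) = ND(⋃ over arcs a with head x of (T(tail a) + {w a}))`, then `T(t)` is the Pareto
frontier of the network, and more generally `T(x) = ND({w(q) : q an r–x path})` for every
node `x`. -/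
theorem top_down_labeling_correct {V A : Type*} [Fintype V] [Fintype A] {K : ℕ}
    (N : Network V A K) (T : V → Set (Fin K → ℝ))
    (hroot : T N.root = {0})
    (hrec : ∀ x : V, x ≠ N.root →
      T x = ND (⋃ a ∈ {a : A | N.hd a = x}, (fun z => z + N.w a) '' T (N.tl a))) :
    T N.terminal = N.Pareto ∧ ∀ x : V, T x = ND (N.weights N.root x) :=
  top_down_labeling_correct_general N T hroot hrec
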